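/- arXiv:2510.04960 — 8 statements merged into one kernel-verified Lean document; each statement's English description precedes it below -/
import Mathlib

section
/- In a weakly dicomplemented lattice, (x ∧ y)^Δ = x^Δ ∨ y^Δ for all x, y. -/
/-- A weakly dicomplemented lattice. -/
class WDL (L : Type*) extends Lattice L, BoundedOrder L where
  delta : L → L
  nabla : L → L
  delta_delta_le : ∀ x : L, delta (delta x) ≤ x
  delta_antitone : ∀ x y : L, x ≤ y → delta y ≤ delta x
  delta_ax3 : ∀ x y : L, (x ⊓ y) ⊔ (x ⊓ delta y) = x
  le_nabla_nabla : ∀ x : L, x ≤ nabla (nabla x)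
  nabla_antitone : ∀ x y : L, x ≤ y → nabla y ≤ nabla x
  nabla_ax3 : ∀ x y : L, (x ⊔ y) ⊓ (x ⊔ nabla y) = x

open WDL

variable {L : Type*}

/-- A filter: nonempty, upward closed, closed under meets. -/
def IsFilter [Lattice L] (F : Set L) : Prop :=
  F.Nonempty ∧ (∀ x ∈ F, ∀ y : L, x ≤ y → y ∈ F) ∧ (∀ x ∈ F, ∀ y ∈ F, x ⊓ y ∈ F)
theorem stmt1 [WDL L] (x y : L) : delta (x ⊓ y) = delta x ⊔ delta y := by
  apply le_antisymm
  · have h : delta (delta x ⊔ delta y) ≤ x ⊓ y := by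
      refine le_inf ?_ ?_
      · exact le_trans (delta_antitone _ _ le_sup_left) (delta_delta_le x)
      · exact le_trans (delta_antitone _ _ le_sup_right) (delta_delta_le y)
    exact le_trans (delta_antitone _ _ h) (delta_delta_le _)
  · exact sup_le (delta_antitone _ _ inf_le_left) (delta_antitone _ _ inf_le_right)
end

section
/- For any subset X of a weakly dicomplemented lattice L, the filter generated by X satisfies [X)* = X*, where X* := {a ∈ L : ∀ x ∈ X, x^Δ ≤ a} and [X) is the filter generated by X. -/
open WDL

variable {L : Type*}

/-- The dual weak annihilator X* of a subset X. -/
def star [WDL L] (X : Set L) : Set L := {a : L | ∀ x ∈ X, delta x ≤ a}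

/-- The filter generated by X. -/
def genFilter [Lattice L] [BoundedOrder L] (X : Set L) : Set L :=
  {x : L | ∃ l : List L, l ≠ [] ∧ (∀ u ∈ l, u ∈ X) ∧ l.foldr (· ⊓ ·) ⊤ ≤ x}

lemma delta_le_foldr [WDL L] (a : L) :
    ∀ l : List L, (∀ u ∈ l, delta u ≤ a) → delta a ≤ l.foldr (· ⊓ ·) ⊤ := by
  intro l
  induction l with
  | nil => intro _; exact le_top
  | cons u l ih =>
    intro h
    simp only [List.foldr_cons]
    refine le_inf ?_ (ih fun v hv => h v (by simp [hv]))
    exact le_trans (delta_antitone _ _ (h u (by simp))) (delta_delta_le u)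

theorem stmt8 [WDL L] (X : Set L) : star (genFilter X) = star X := by
  ext a
  constructor
  · intro ha x hx
    exact ha x ⟨[x], by simp, by simp [hx], by simp⟩
  · rintro ha x ⟨l, -, hl, hle⟩
    have h1 : delta a ≤ l.foldr (· ⊓ ·) ⊤ :=
      delta_le_foldr a l fun u hu => ha u (hl u hu)
    calc delta x ≤ delta (l.foldr (· ⊓ ·) ⊤) := delta_antitone _ _ hle
      _ ≤ delta (delta a) := delta_antitone _ _ h1
      _ ≤ a := delta_delta_le a
end

section
/- For filters F, G of a weakly dicomplemented lattice L, (F ∨ G) ∩ (F ∨ G*) = F, where ∨ denotes the join of filters and G* := {a ∈ L : ∀ g ∈ G, g^Δ ≤ a}. Consequently the lattice of filters of L with the operation F ↦ F* is a dual weakly complemented lattice. -/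
open WDL

variable {L : Type*}

/-- The join of two filters. -/
def filterJoin [Lattice L] (F G : Set L) : Set L :=
  {x : L | ∃ f ∈ F, ∃ g ∈ G, f ⊓ g ≤ x}

theorem stmt9 [WDL L] :
    (∀ F G : Set L, IsFilter F → IsFilter G →
      filterJoin F G ∩ filterJoin F (star G) = F) ∧
    (∀ F : Set L, IsFilter F → F ⊆ star (star F)) ∧
    (∀ F G : Set L, IsFilter F → IsFilter G → F ⊆ G → star G ⊆ star F) := by
  refine ⟨?_, ?_, ?_⟩
  · intro F G ⟨⟨f0, hf0⟩, hFup, hFmeet⟩ ⟨⟨g0, hg0⟩, hGup, hGmeet⟩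
    ext x
    constructor
    · rintro ⟨⟨f, hf, g, hg, hfg⟩, ⟨f', hf', a, ha, hfa⟩⟩
      have hh : f ⊓ f' ∈ F := hFmeet f hf f' hf'
      have h1 : (f ⊓ f') ⊓ g ≤ x := le_trans (inf_le_inf_right g inf_le_left) hfg
      have h2 : (f ⊓ f') ⊓ delta g ≤ x :=
        le_trans (inf_le_inf (inf_le_right) (ha g hg)) hfa
      have : f ⊓ f' ≤ x := by
        rw [← delta_ax3 (f ⊓ f') g]
        exact sup_le h1 h2
      exact hFup _ hh x this
    · intro hx
      refine ⟨⟨x, hx, g0, hg0, inf_le_left⟩, ⟨x, hx, ⊤, ?_, inf_le_left⟩⟩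
      intro g _; exact le_top
  · intro F _ x hx a ha
    exact le_trans (delta_antitone _ _ (ha x hx)) (delta_delta_le x)
  · intro F G _ _ hFG a ha x hx
    exact ha x (hFG hx)
end

section
/- For a filter F of a weakly dicomplemented lattice L, the following are equivalent: (†) F is closed under the operation x ⊓̄ y := (x^Δ ∨ y^Δ)^Δ; (‡) there exists a filter G of the dual skeleton S̄(L) = {x : x^{ΔΔ} = x} with F = {x ∈ L : x^{ΔΔ} ∈ G}; (†‡) there exists a filter G of S̄(L) with F = {x ∈ L : ∃ u ∈ G, u ≤ x}. -/
open WDL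

variable {L : Type*}

/-- x ⊓̄ y := (x^Δ ∨ y^Δ)^Δ. -/
def sqcap [WDL L] (x y : L) : L := delta (delta x ⊔ delta y)

/-- The dual skeleton. -/
def Sbar (L : Type*) [WDL L] : Set L := {x : L | delta (delta x) = x}

/-- A filter of the dual skeleton: a nonempty subset of S̄(L), upward closed
within S̄(L), closed under ⊓̄. -/
def IsSkelFilter [WDL L] (G : Set L) : Prop :=
  G ⊆ Sbar L ∧ G.Nonempty ∧ (∀ x ∈ G, ∀ y ∈ Sbar L, x ≤ y → y ∈ G) ∧
    (∀ x ∈ G, ∀ y ∈ G, sqcap x y ∈ G)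

theorem stmt12 [WDL L] (F : Set L) (hF : IsFilter F) :
    ((∀ x ∈ F, ∀ y ∈ F, sqcap x y ∈ F) ↔
      (∃ G : Set L, IsSkelFilter G ∧ F = {x : L | delta (delta x) ∈ G})) ∧
    ((∀ x ∈ F, ∀ y ∈ F, sqcap x y ∈ F) ↔
      (∃ G : Set L, IsSkelFilter G ∧ F = {x : L | ∃ u ∈ G, u ≤ x})) := by
  obtain ⟨hne, hup, _⟩ := hF
  have h3 : ∀ x : L, delta (delta (delta x)) = delta x := fun x =>
    le_antisymm (delta_delta_le _) (delta_antitone _ _ (delta_delta_le x))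
  have hSb : ∀ x : L, delta x ∈ Sbar L := fun x => h3 x
  -- direction (1) → both existentials, with G = F ∩ Sbar L
  have main : ∀ h1 : (∀ x ∈ F, ∀ y ∈ F, sqcap x y ∈ F),
      IsSkelFilter (F ∩ Sbar L) ∧ F = {x : L | delta (delta x) ∈ F ∩ Sbar L} ∧
        F = {x : L | ∃ u ∈ F ∩ Sbar L, u ≤ x} := by
    intro h1
    have hdd : ∀ x ∈ F, delta (delta x) ∈ F ∩ Sbar L := by
      intro x hx
      have := h1 x hx x hx
      simp only [sqcap, sup_idem] at this
      exact ⟨this, hSb _⟩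
    refine ⟨⟨Set.inter_subset_right, ?_, ?_, ?_⟩, ?_, ?_⟩
    · obtain ⟨x, hx⟩ := hne; exact ⟨_, hdd x hx⟩
    · rintro x ⟨hxF, _⟩ y hyS hxy
      exact ⟨hup x hxF y hxy, hyS⟩
    · rintro x ⟨hxF, _⟩ y ⟨hyF, _⟩
      exact ⟨h1 x hxF y hyF, hSb _⟩
    · ext x
      constructor
      · exact fun hx => hdd x hx
      · rintro ⟨hxF, _⟩
        exact hup _ hxF x (delta_delta_le x)
    · ext x
      constructor
      · exact fun hx => ⟨_, hdd x hx, delta_delta_le x⟩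
      · rintro ⟨u, ⟨huF, _⟩, hux⟩
        exact hup u huF x hux
  constructor
  · constructor
    · intro h1
      exact ⟨F ∩ Sbar L, (main h1).1, (main h1).2.1⟩
    · rintro ⟨G, ⟨hGS, _, _, hGcap⟩, rfl⟩
      intro x hx y hy
      have key : sqcap (delta (delta x)) (delta (delta y)) ∈ G := hGcap _ hx _ hy
      simp only [Set.mem_setOf_eq, sqcap, h3] at key ⊢
      exact key
  · constructor
    · intro h1
      exact ⟨F ∩ Sbar L, (main h1).1, (main h1).2.2⟩
    · rintro ⟨G, ⟨hGS, _, _, hGcap⟩, rfl⟩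
      rintro x ⟨u, huG, hux⟩ y ⟨v, hvG, hvy⟩
      refine ⟨sqcap u v, hGcap u huG v hvG, ?_⟩
      exact delta_antitone _ _
        (sup_le_sup (delta_antitone _ _ hux) (delta_antitone _ _ hvy))
end

section
/- Let G be a filter of the dual skeleton S̄(L) of a weakly dicomplemented lattice L, and set F_G := {x ∈ L : x^{ΔΔ} ∈ G}. Then F_G is an S-filter of L (a filter closed under ⊓̄) and F_G ∩ S̄(L) = G. Conversely, if F is an S-filter of L, then E := F ∩ S̄(L) is a filter of S̄(L) and F_E = F. -/
open WDL

variable {L : Type*}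

/-- An S-filter of L: a filter closed under ⊓̄. -/
def IsSFilter [WDL L] (F : Set L) : Prop :=
  IsFilter F ∧ ∀ x ∈ F, ∀ y ∈ F, sqcap x y ∈ F


section Aux
variable [WDL L]

lemma ddd (x : L) : delta (delta (delta x)) = delta x :=
  le_antisymm (delta_delta_le _) (delta_antitone _ _ (delta_delta_le x))

lemma dd_mono {x y : L} (h : x ≤ y) : delta (delta x) ≤ delta (delta y) :=
  delta_antitone _ _ (delta_antitone _ _ h)

lemma sup_delta_eq_top (y : L) : y ⊔ delta y = ⊤ := by
  have := delta_ax3 (⊤ : L) y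
  simpa using this

lemma delta_bot : delta (⊥ : L) = ⊤ := by
  have := sup_delta_eq_top (⊥ : L)
  simpa using this

lemma top_mem_Sbar : (⊤ : L) ∈ Sbar L := by
  have : delta (delta (delta (⊥ : L))) = delta (⊥ : L) := ddd _
  simpa [delta_bot, Sbar] using this

lemma sqcap_mem_Sbar (x y : L) : sqcap x y ∈ Sbar L := ddd _

lemma sqcap_le_left (x y : L) : sqcap x y ≤ x :=
  le_trans (delta_antitone _ _ le_sup_left) (delta_delta_le x)

lemma sqcap_le_right (x y : L) : sqcap x y ≤ y :=
  le_trans (delta_antitone _ _ le_sup_right) (delta_delta_le y)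

lemma sqcap_dd (x y : L) :
    sqcap (delta (delta x)) (delta (delta y)) = sqcap x y := by
  unfold sqcap; rw [ddd, ddd]

lemma sqcap_self (x : L) : sqcap x x = delta (delta x) := by
  unfold sqcap; rw [sup_idem]

end Aux

theorem stmt13 [WDL L] :
    (∀ G : Set L, IsSkelFilter G →
      IsSFilter {x : L | delta (delta x) ∈ G} ∧
        {x : L | delta (delta x) ∈ G} ∩ Sbar L = G) ∧
    (∀ F : Set L, IsSFilter F →
      IsSkelFilter (F ∩ Sbar L) ∧
        {x : L | delta (delta x) ∈ F ∩ Sbar L} = F) := by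
  constructor
  · rintro G ⟨hGS, ⟨g, hg⟩, hup, hcap⟩
    have hFG : IsSFilter {x : L | delta (delta x) ∈ G} := by
      refine ⟨⟨⟨g, ?_⟩, ?_, ?_⟩, ?_⟩
      · show delta (delta g) ∈ G
        rw [hGS hg]; exact hg
      · intro x hx y hxy
        exact hup _ hx _ (ddd _) (dd_mono hxy)
      · intro x hx y hy
        have h1 : sqcap x y ∈ G := by
          have := hcap _ hx _ hy
          rwa [sqcap_dd] at this
        have h2 : sqcap x y ≤ delta (delta (x ⊓ y)) := by
          have hle : sqcap x y ≤ x ⊓ y :=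
            le_inf (sqcap_le_left x y) (sqcap_le_right x y)
          have := dd_mono hle
          rwa [sqcap_mem_Sbar x y] at this
        exact hup _ h1 _ (ddd _) h2
      · intro x hx y hy
        show delta (delta (sqcap x y)) ∈ G
        rw [sqcap_mem_Sbar x y, ← sqcap_dd]
        exact hcap _ hx _ hy
    refine ⟨hFG, ?_⟩
    ext x
    constructor
    · rintro ⟨hx, hxs⟩
      have : delta (delta x) ∈ G := hx
      rwa [hxs] at this
    · intro hx
      exact ⟨by show delta (delta x) ∈ G; rw [hGS hx]; exact hx, hGS hx⟩
  · rintro F ⟨⟨⟨f, hf⟩, hup, hmeet⟩, hcap⟩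
    have htopF : (⊤ : L) ∈ F := hup _ hf _ le_top
    have hddF : ∀ x ∈ F, delta (delta x) ∈ F := by
      intro x hx
      have := hcap _ hx _ hx
      rwa [sqcap_self] at this
    refine ⟨⟨fun x hx => hx.2, ⟨⊤, htopF, top_mem_Sbar⟩, ?_, ?_⟩, ?_⟩
    · rintro x ⟨hxF, _⟩ y hyS hxy
      exact ⟨hup _ hxF _ hxy, hyS⟩
    · rintro x ⟨hxF, _⟩ y ⟨hyF, _⟩
      exact ⟨hcap _ hxF _ hyF, sqcap_mem_Sbar x y⟩
    · ext x
      constructor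
      · rintro ⟨hF, _⟩
        exact hup _ hF _ (delta_delta_le x)
      · intro hx
        exact ⟨hddF _ hx, ddd _⟩
end

section
/- In a weakly dicomplemented lattice L, the S-filter generated by a nonempty set X equals {x ∈ L : ∃ x₁,...,xₙ ∈ X with x₁ ⊓̄ ... ⊓̄ xₙ ≤ x}; in particular the principal S-filter S[a) equals the principal filter [a^{ΔΔ}). -/
open WDL

variable {L : Type*}

/-- The S-filter generated by X. -/
def Sgen [WDL L] (X : Set L) : Set L :=
  ⋂₀ {F : Set L | IsSFilter F ∧ X ⊆ F}

section Aux
variable [WDL L]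

lemma d_anti {x y : L} (h : x ≤ y) : delta y ≤ delta x := delta_antitone x y h

lemma sqcap_mono {x x' y y' : L} (hx : x ≤ x') (hy : y ≤ y') :
    sqcap x y ≤ sqcap x' y' :=
  d_anti (sup_le_sup (d_anti hx) (d_anti hy))

lemma dd_sqcap (x y : L) : delta (delta (sqcap x y)) = sqcap x y := ddd _

lemma dd_le_sqcap (x y : L) : delta (delta (x ⊓ y)) ≤ sqcap x y :=
  d_anti (sup_le (d_anti inf_le_left) (d_anti inf_le_right))

lemma foldl_le_init (l : List L) : ∀ c : L, l.foldl sqcap c ≤ c := by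
  induction l with
  | nil => intro c; exact le_rfl
  | cons u l ih => intro c; exact le_trans (ih (sqcap c u)) (sqcap_le_left c u)

lemma foldl_mono (l : List L) : ∀ {c c' : L}, c ≤ c' →
    l.foldl sqcap c ≤ l.foldl sqcap c' := by
  induction l with
  | nil => intro c c' h; exact h
  | cons u l ih => intro c c' h; exact ih (sqcap_mono h le_rfl)

lemma foldl_skel (l : List L) : ∀ {c : L}, delta (delta c) = c →
    delta (delta (l.foldl sqcap c)) = l.foldl sqcap c := by
  induction l with
  | nil => intro c hc; exact hc
  | cons u l ih => intro c hc; exact ih (dd_sqcap c u)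

lemma mem_sfilter_foldl {F : Set L} (hF : IsSFilter F) (l : List L) :
    ∀ a : L, a ∈ F → (∀ u ∈ l, u ∈ F) → l.foldl sqcap a ∈ F := by
  induction l with
  | nil => intro a ha _; exact ha
  | cons u l ih =>
      intro a ha hl
      exact ih (sqcap a u) (hF.2 a ha u (hl u List.mem_cons_self))
        (fun v hv => hl v (List.mem_cons_of_mem u hv))

lemma FX_sfilter {X : Set L} (hX : X.Nonempty) :
    IsSFilter {x : L | ∃ (a : L) (l : List L), a ∈ X ∧ (∀ u ∈ l, u ∈ X) ∧
      l.foldl sqcap a ≤ x} := by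
  obtain ⟨a0, ha0⟩ := hX
  have key : ∀ (a b : L) (l m : List L),
      ((l ++ b :: m).foldl sqcap a ≤ l.foldl sqcap a ∧
       (l ++ b :: m).foldl sqcap a ≤ m.foldl sqcap b) := by
    intro a b l m
    have heq : (l ++ b :: m).foldl sqcap a = m.foldl sqcap (sqcap (l.foldl sqcap a) b) := by
      simp [List.foldl_append]
    constructor
    · rw [heq]
      exact le_trans (foldl_le_init m _) (sqcap_le_left _ _)
    · rw [heq]
      exact foldl_mono m (sqcap_le_right _ _)
  refine ⟨⟨⟨a0, a0, [], ha0, by simp, le_rfl⟩, ?_, ?_⟩, ?_⟩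
  · rintro x ⟨a, l, ha, hl, hle⟩ y hxy
    exact ⟨a, l, ha, hl, le_trans hle hxy⟩
  · rintro x ⟨a, l, ha, hl, hle⟩ y ⟨b, m, hb, hm, hle'⟩
    refine ⟨a, l ++ b :: m, ha, ?_, ?_⟩
    · intro u hu
      rcases List.mem_append.1 hu with h | h
      · exact hl u h
      · rcases List.mem_cons.1 h with h | h
        · exact h ▸ hb
        · exact hm u h
    · exact le_inf (le_trans (key a b l m).1 hle) (le_trans (key a b l m).2 hle')
  · rintro x ⟨a, l, ha, hl, hle⟩ y ⟨b, m, hb, hm, hle'⟩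
    refine ⟨a, l ++ b :: m, ha, ?_, ?_⟩
    · intro u hu
      rcases List.mem_append.1 hu with h | h
      · exact hl u h
      · rcases List.mem_cons.1 h with h | h
        · exact h ▸ hb
        · exact hm u h
    · -- w is in skeleton and ≤ fa ⊓ fb, hence w ≤ ΔΔ(fa⊓fb) ≤ sqcap fa fb ≤ sqcap x y
      set w := (l ++ b :: m).foldl sqcap a with hw
      have hwskel : delta (delta w) = w := by
        rw [hw]
        have : (l ++ b :: m).foldl sqcap a = m.foldl sqcap (sqcap (l.foldl sqcap a) b) := by
          simp [List.foldl_append]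
        rw [this]
        exact foldl_skel m (dd_sqcap _ _)
      have hwle : w ≤ l.foldl sqcap a ⊓ m.foldl sqcap b :=
        le_inf (key a b l m).1 (key a b l m).2
      calc w = delta (delta w) := hwskel.symm
        _ ≤ delta (delta (l.foldl sqcap a ⊓ m.foldl sqcap b)) := d_anti (d_anti hwle)
        _ ≤ sqcap (l.foldl sqcap a) (m.foldl sqcap b) := dd_le_sqcap _ _
        _ ≤ sqcap x y := sqcap_mono hle hle'

end Aux

theorem stmt14 [WDL L] :
    (∀ X : Set L, X.Nonempty →
      Sgen X = {x : L | ∃ (a : L) (l : List L), a ∈ X ∧ (∀ u ∈ l, u ∈ X) ∧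
        l.foldl sqcap a ≤ x}) ∧
    (∀ a : L, Sgen {a} = Set.Ici (delta (delta a))) := by
  have main : ∀ X : Set L, X.Nonempty →
      Sgen X = {x : L | ∃ (a : L) (l : List L), a ∈ X ∧ (∀ u ∈ l, u ∈ X) ∧
        l.foldl sqcap a ≤ x} := by
    intro X hX
    apply subset_antisymm
    · exact Set.sInter_subset_of_mem ⟨FX_sfilter hX,
        fun a ha => ⟨a, [], ha, by simp, le_rfl⟩⟩
    · rintro x ⟨a, l, ha, hl, hle⟩ F ⟨hF, hXF⟩
      exact hF.1.2.1 _ (mem_sfilter_foldl hF l a (hXF ha) (fun u hu => hXF (hl u hu)))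
        x hle
  refine ⟨main, fun a => ?_⟩
  rw [main {a} ⟨a, rfl⟩]
  ext x
  constructor
  · rintro ⟨b, l, hb, hl, hle⟩
    rcases hb with rfl
    have aux : ∀ (m : List L), (∀ u ∈ m, u ∈ ({b} : Set L)) → ∀ c : L,
        delta (delta b) ≤ c → delta (delta b) ≤ m.foldl sqcap c := by
      intro m
      induction m with
      | nil => intro _ c hc; exact hc
      | cons u m ih =>
          intro hm c hc
          have hu : u = b := hm u List.mem_cons_self
          refine ih (fun v hv => hm v (List.mem_cons_of_mem u hv)) _ ?_
          have : sqcap (delta (delta b)) b = delta (delta b) := by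
            unfold sqcap
            rw [ddd, sup_idem]
          calc delta (delta b) = sqcap (delta (delta b)) b := this.symm
            _ ≤ sqcap c u := by rw [hu]; exact sqcap_mono hc le_rfl
    exact le_trans (aux l hl b (delta_delta_le b)) hle
  · intro hx
    refine ⟨a, [a], rfl, by simp, ?_⟩
    show sqcap a a ≤ x
    have : sqcap a a = delta (delta a) := by unfold sqcap; rw [sup_idem]
    rw [this]
    exact hx
end

section
/- In a weakly dicomplemented lattice, every prime filter is a primary filter; moreover, every maximal (proper) filter is a primary filter. -/
open WDL

variable {L : Type*}

/-- A primary filter. -/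
def IsPrimaryFilter [WDL L] (F : Set L) : Prop :=
  IsFilter F ∧ ∀ x : L, x ∈ F ∨ delta x ∈ F

theorem stmt16 [WDL L] :
    (∀ F : Set L, IsFilter F → F ≠ Set.univ →
      (∀ x y : L, x ⊔ y ∈ F → x ∈ F ∨ y ∈ F) → IsPrimaryFilter F) ∧
    (∀ F : Set L, IsFilter F → F ≠ Set.univ →
      (∀ G : Set L, IsFilter G → G ≠ Set.univ → F ⊆ G → G = F) →
      IsPrimaryFilter F) := by
  have hsup : ∀ x : L, x ⊔ delta x = (⊤ : L) := by
    intro x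
    have := delta_ax3 (⊤ : L) x
    simpa using this
  have htop : ∀ F : Set L, IsFilter F → (⊤ : L) ∈ F := by
    rintro F ⟨⟨a, ha⟩, hup, _⟩
    exact hup a ha ⊤ le_top
  constructor
  · intro F hF hne hprime
    refine ⟨hF, fun x => ?_⟩
    apply hprime
    rw [hsup x]
    exact htop F hF
  · intro F hF hne hmax
    refine ⟨hF, fun x => ?_⟩
    by_contra hcon
    push_neg at hcon
    obtain ⟨hx, hdx⟩ := hcon
    obtain ⟨hnonempty, hup, hmeet⟩ := hF
    set G : Set L := {z | ∃ f ∈ F, f ⊓ x ≤ z} with hG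
    have hFG : F ⊆ G := fun f hf => ⟨f, hf, inf_le_left⟩
    have hGfilt : IsFilter G := by
      refine ⟨⟨x, ⊤, htop F ⟨hnonempty, hup, hmeet⟩, by simp⟩, ?_, ?_⟩
      · rintro z ⟨f, hf, hle⟩ y hzy
        exact ⟨f, hf, hle.trans hzy⟩
      · rintro z ⟨f, hf, hle⟩ w ⟨g, hg, hle'⟩
        refine ⟨f ⊓ g, hmeet f hf g hg, ?_⟩
        have h1 : f ⊓ g ⊓ x ≤ z := le_trans (by gcongr; exact inf_le_left) hle
        have h2 : f ⊓ g ⊓ x ≤ w := le_trans (by gcongr; exact inf_le_right) hle'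
        exact le_inf h1 h2
    have hGne : G ≠ Set.univ := by
      intro hGuniv
      have hbot : (⊥ : L) ∈ G := by rw [hGuniv]; trivial
      obtain ⟨f, hf, hle⟩ := hbot
      have hfx : f ⊓ x = ⊥ := le_bot_iff.mp hle
      have : f ≤ delta x := by
        have := delta_ax3 f x
        rw [hfx, bot_sup_eq] at this
        rw [← this]; exact inf_le_right
      exact hdx (hup f hf _ this)
    have := hmax G hGfilt hGne hFG
    apply hx
    rw [← this]
    exact ⟨⊤, htop F ⟨hnonempty, hup, hmeet⟩, by simp⟩
end

section
/- Let E be a filter of the dual skeleton S̄(L) of a weakly dicomplemented lattice L. Then E is primary (for all x ∈ S̄(L), x ∈ E or x^Δ ∈ E) if and only if E is prime (x ∨ y ∈ E implies x ∈ E or y ∈ E, for x, y ∈ S̄(L)); moreover, every primary filter of S̄(L) is a maximal filter of S̄(L). -/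
open WDL

variable {L : Type*}

theorem stmt17 [WDL L] (E : Set L) (hE : IsSkelFilter E) (hproper : E ≠ Sbar L) :
    ((∀ x ∈ Sbar L, x ∈ E ∨ delta x ∈ E) ↔
      (∀ x ∈ Sbar L, ∀ y ∈ Sbar L, x ⊔ y ∈ E → x ∈ E ∨ y ∈ E)) ∧
    ((∀ x ∈ Sbar L, x ∈ E ∨ delta x ∈ E) →
      ∀ H : Set L, IsSkelFilter H → H ≠ Sbar L → E ⊆ H → H = E) := by
  obtain ⟨hsub, hne, hup, hmeet⟩ := hE
  have sup_top : ∀ x : L, x ⊔ delta x = ⊤ := fun x => by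
    have := delta_ax3 (⊤ : L) x; simpa using this
  have dbot : delta (⊥ : L) = ⊤ := by have := sup_top (⊥ : L); simpa using this
  have dtop : delta (⊤ : L) = ⊥ := by
    have h : delta (⊤ : L) = delta (delta (⊥ : L)) := by rw [dbot]
    exact le_bot_iff.mp (h ▸ delta_delta_le (⊥ : L))
  have δmem : ∀ x : L, delta x ∈ Sbar L := fun x =>
    le_antisymm (delta_delta_le _) (delta_antitone _ _ (delta_delta_le x))
  have topSbar : (⊤ : L) ∈ Sbar L := by
    show delta (delta (⊤ : L)) = ⊤; rw [dtop, dbot]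
  have full_of_bot : ∀ G : Set L, G ⊆ Sbar L →
      (∀ x ∈ G, ∀ y ∈ Sbar L, x ≤ y → y ∈ G) → (⊥ : L) ∈ G → G = Sbar L :=
    fun G hGs hGup hb => Set.Subset.antisymm hGs (fun y hy => hGup ⊥ hb y hy bot_le)
  have topE : (⊤ : L) ∈ E := by
    obtain ⟨e, he⟩ := hne
    exact hup e he ⊤ topSbar le_top
  have sq_bot : ∀ x : L, x ∈ Sbar L → sqcap x (delta x) = ⊥ := by
    intro x hx
    have hx' : delta (delta x) = x := hx
    show delta (delta x ⊔ delta (delta x)) = ⊥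
    rw [hx', sup_comm, sup_top, dtop]
  constructor
  · constructor
    · intro hprim x hx y hy hxy
      by_contra hcon
      push_neg at hcon
      obtain ⟨hxE, hyE⟩ := hcon
      have hdx : delta x ∈ E := (hprim x hx).resolve_left hxE
      have hdy : delta y ∈ E := (hprim y hy).resolve_left hyE
      have h1 : sqcap (delta x) (delta y) ∈ E := hmeet _ hdx _ hdy
      have heq : sqcap (delta x) (delta y) = delta (x ⊔ y) := by
        show delta (delta (delta x) ⊔ delta (delta y)) = delta (x ⊔ y)
        rw [(hx : delta (delta x) = x), (hy : delta (delta y) = y)]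
      rw [heq] at h1
      have h2 : sqcap (x ⊔ y) (delta (x ⊔ y)) ∈ E := hmeet _ hxy _ h1
      have hxyS : x ⊔ y ∈ Sbar L := hsub hxy
      rw [sq_bot _ hxyS] at h2
      exact hproper (full_of_bot E hsub hup h2)
    · intro hpr x hx
      exact hpr x hx (delta x) (δmem x) (by rw [sup_top x]; exact topE)
  · intro hprim H hH hHne hEH
    obtain ⟨hHsub, _, hHup, hHmeet⟩ := hH
    refine Set.Subset.antisymm (fun x hxH => ?_) hEH
    have hxS : x ∈ Sbar L := hHsub hxH
    rcases hprim x hxS with h | h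
    · exact h
    · exfalso
      have hb : sqcap x (delta x) ∈ H := hHmeet _ hxH _ (hEH h)
      rw [sq_bot _ hxS] at hb
      exact hHne (full_of_bot H hHsub hHup hb)
end
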